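/- The greedy algorithm for maximizing a monotone submodular function f : 2^M → ℝ with f(∅) = 0 subject to a cardinality constraint k, when run with an α-approximate oracle (which at each step, given the current set S, returns some i ∈ M \ S with f(S ∪ {i}) − f(S) ≥ (1/α) · max_{j ∈ M \ S} (f(S ∪ {j}) − f(S))), produces after k iterations a set S_k satisfying f(S_k) ≥ (1 − e^{−1/α}) · max_{|S| ≤ k} f(S). -/

import Mathlib

/-!
Write `gap j = f T - f (S j)` for a competitor `T` with `|T| ≤ k`. By submodularity the gain of
adding all of `T` to `S j` is at most the sum of the single-element gains, each of which the
oracle's choice beats up to the factor `a`; so one greedy step closes at least a `1 / (a k)`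
fraction of the gap. Hence `gap k ≤ (1 - 1 / (a k)) ^ k * f T ≤ exp (-1 / a) * f T`.
-/

open Finset

section Greedy

variable {ι : Type*} [DecidableEq ι] {M : Finset ι} {f : Finset ι → ℝ}

theorem sub_le_sum_insert_sub_of_submodular
    (hsub : ∀ A B : Finset ι, A ⊆ M → B ⊆ M → f A + f B ≥ f (A ∪ B) + f (A ∩ B))
    {A : Finset ι} (hA : A ⊆ M) {T : Finset ι} (hT : T ⊆ M) :
    f (A ∪ T) - f A ≤ ∑ i ∈ T \ A, (f (insert i A) - f A) := by
  induction T using Finset.induction_on with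
  | empty => simp
  | @insert x T hxT ih =>
    have hx : x ∈ M := hT (mem_insert_self x T)
    have hTM : T ⊆ M := (subset_insert x T).trans hT
    by_cases hxA : x ∈ A
    · rw [union_insert, insert_eq_self.mpr (mem_union_left T hxA), insert_sdiff_of_mem T hxA]
      exact ih hTM
    · have hxTA : x ∉ T \ A := fun h => hxT (mem_sdiff.mp h).1
      rw [insert_sdiff_of_notMem T hxA, sum_insert hxTA]
      have hsubx := hsub (insert x A) (A ∪ T) (insert_subset hx hA) (union_subset hA hTM)
      have hinter : insert x A ∩ (A ∪ T) = A := by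
        rw [insert_inter_of_notMem (by simp [hxA, hxT]), inter_eq_left]
        exact subset_union_left
      have hunion : insert x A ∪ (A ∪ T) = A ∪ insert x T := by
        rw [insert_union, union_insert, ← union_assoc, union_self]
      rw [hinter, hunion] at hsubx
      linarith [ih hTM]

theorem sub_le_mul_gain_of_approx_greedy
    (hmono : ∀ A B : Finset ι, A ⊆ B → B ⊆ M → f A ≤ f B)
    (hsub : ∀ A B : Finset ι, A ⊆ M → B ⊆ M → f A + f B ≥ f (A ∪ B) + f (A ∩ B))
    {a : ℝ} (ha : 0 < a) {k : ℕ} {S T : Finset ι} {i : ι} (hS : S ⊆ M) (hi : i ∈ M \ S)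
    (hgreedy : ∀ i' ∈ M \ S, f (insert i S) - f S ≥ (1 / a) * (f (insert i' S) - f S))
    (hT : T ⊆ M) (hTk : T.card ≤ k) :
    f T - f S ≤ a * k * (f (insert i S) - f S) := by
  have hiM : i ∈ M := (mem_sdiff.mp hi).1
  have hgain : 0 ≤ f (insert i S) - f S :=
    sub_nonneg.mpr (hmono _ _ (subset_insert i S) (insert_subset hiM hS))
  have hgain_le : ∀ i' ∈ T \ S, f (insert i' S) - f S ≤ a * (f (insert i S) - f S) := by
    intro i' hi'
    have hi'M : i' ∈ M \ S := mem_sdiff.mpr ⟨hT (mem_sdiff.mp hi').1, (mem_sdiff.mp hi').2⟩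
    have := mul_le_mul_of_nonneg_left (hgreedy i' hi'M) ha.le
    rwa [← mul_assoc, mul_one_div_cancel ha.ne', one_mul] at this
  have hcard : ((T \ S).card : ℝ) ≤ k := by
    exact_mod_cast (card_le_card sdiff_subset).trans hTk
  calc f T - f S ≤ f (S ∪ T) - f S := by
        gcongr; exact hmono _ _ subset_union_right (union_subset hS hT)
    _ ≤ ∑ i' ∈ T \ S, (f (insert i' S) - f S) := sub_le_sum_insert_sub_of_submodular hsub hS hT
    _ ≤ ∑ _i' ∈ T \ S, a * (f (insert i S) - f S) := sum_le_sum hgain_le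
    _ = (T \ S).card * (a * (f (insert i S) - f S)) := by rw [sum_const, nsmul_eq_mul]
    _ ≤ k * (a * (f (insert i S) - f S)) := by gcongr
    _ = a * k * (f (insert i S) - f S) := by ring

theorem sub_insert_le_of_approx_greedy
    (hmono : ∀ A B : Finset ι, A ⊆ B → B ⊆ M → f A ≤ f B)
    (hsub : ∀ A B : Finset ι, A ⊆ M → B ⊆ M → f A + f B ≥ f (A ∪ B) + f (A ∩ B))
    {a : ℝ} (ha : 0 < a) {k : ℕ} (hk : 0 < k) {S T : Finset ι} {i : ι} (hS : S ⊆ M)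
    (hi : i ∈ M \ S)
    (hgreedy : ∀ i' ∈ M \ S, f (insert i S) - f S ≥ (1 / a) * (f (insert i' S) - f S))
    (hT : T ⊆ M) (hTk : T.card ≤ k) :
    f T - f (insert i S) ≤ (1 - 1 / a / k) * (f T - f S) := by
  have hak : 0 < a * k := mul_pos ha (Nat.cast_pos.mpr hk)
  have h := sub_le_mul_gain_of_approx_greedy hmono hsub ha hS hi hgreedy hT hTk
  have hfrac : (f T - f S) / (a * k) ≤ f (insert i S) - f S := by
    rw [div_le_iff₀ hak]; linarith
  rw [div_div, sub_mul, one_mul, one_div_mul_eq_div]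
  linarith

end Greedy

theorem greedy_approx_oracle_submodular_maximization {ι : Type*} [DecidableEq ι]
    (M : Finset ι) (f : Finset ι → ℝ) (h0 : f ∅ = 0)
    (hmono : ∀ A B : Finset ι, A ⊆ B → B ⊆ M → f A ≤ f B)
    (hsub : ∀ A B : Finset ι, A ⊆ M → B ⊆ M → f A + f B ≥ f (A ∪ B) + f (A ∩ B))
    (k : ℕ) (hk : 1 ≤ k)
    (a : ℝ) (ha : 1 ≤ a)
    (S : ℕ → Finset ι) (hS0 : S 0 = ∅)
    (hstep : ∀ j < k, ∃ i ∈ M \ S j,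
      S (j + 1) = insert i (S j) ∧
      ∀ i' ∈ M \ S j,
        f (insert i (S j)) - f (S j) ≥ (1 / a) * (f (insert i' (S j)) - f (S j))) :
    ∀ T ⊆ M, T.card ≤ k → f (S k) ≥ (1 - Real.exp (-1 / a)) * f T := by
  intro T hT hTk
  have ha0 : 0 < a := one_pos.trans_le ha
  have hak : 1 / a ≤ k := ((div_le_one ha0).mpr ha).trans (by exact_mod_cast hk)
  have hSM : ∀ j ≤ k, S j ⊆ M := by
    intro j
    induction j with
    | zero => simp [hS0]
    | succ j ih =>
      intro hj
      obtain ⟨i, hi, hins, -⟩ := hstep j hj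
      exact hins ▸ insert_subset (mem_sdiff.mp hi).1 (ih (Nat.le_of_succ_le hj))
  have hgap : ∀ j < k, f T - f (S (j + 1)) ≤ (1 - 1 / a / k) * (f T - f (S j)) := by
    intro j hj
    obtain ⟨i, hi, hins, hgreedy⟩ := hstep j hj
    rw [hins]
    exact sub_insert_le_of_approx_greedy hmono hsub ha0 hk (hSM j hj.le) hi hgreedy hT hTk
  have hratio : 0 ≤ 1 - 1 / a / k := by
    rw [sub_nonneg, div_le_one (by positivity)]
    exact hak
  have hdecay := le_geom (u := fun j => f T - f (S j)) hratio k hgap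
  have hexp : (1 - 1 / a / k) ^ k ≤ Real.exp (-1 / a) := by
    rw [neg_div]
    exact Real.one_sub_div_pow_le_exp_neg hak
  have hfT : 0 ≤ f T := h0 ▸ hmono ∅ T (empty_subset T) hT
  rw [hS0, h0, sub_zero] at hdecay
  nlinarith [mul_le_mul_of_nonneg_right hexp hfT]
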